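/- Let H be a real separable Hilbert space, G a real separable Hilbert space. Let (λ_n)_{n∈ℕ} and λ be Borel probability measures on H that are uniformly discretized with exponential weights. Let g : H → G be continuous with ‖g(u)‖_G ≤ exp(b‖u‖_H) for some b > 0 and all u ∈ H. Then the Bochner integrals converge: ∫_H g(u) dλ_n(u) → ∫_H g(u) dλ(u) in G as n → ∞. -/

import Mathlib

/-!
Shrink `g` to `(M / (M + e^{b‖u‖})) • g`: this is bounded by `M`, continuous, and differs from `g`
by at most `e^{2b‖u‖} / M`, so the uniform exponential moments make the truncation error at most
`C(2b) / M` for every measure of the family at once. It remains to treat a bounded continuous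
`f : H → G`. Weak convergence of the measures gives weak convergence in `G` of `∫ f dλₙ`.
Tightness of `λ` yields a compact `K`; a finite net of `f(K)` spans a finite-dimensional `V` that
approximates `f` on a neighbourhood `U` of `K`, and the portmanteau bound on the closed set `Uᶜ`
keeps every `∫ f dλₙ` with large `n` close to `V`, where weak and norm convergence agree.
-/

open MeasureTheory Filter Real Set Metric Topology
open scoped InnerProductSpace BoundedContinuousFunction

lemma tendsto_of_forall_exists_dist_le {ι α : Type*} [PseudoMetricSpace α] {l : Filter ι}
    {x : ι → α} {y : α}
    (h : ∀ ε > 0, ∃ (x' : ι → α) (y' : α), Tendsto x' l (𝓝 y') ∧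
      (∀ᶠ i in l, dist (x i) (x' i) ≤ ε) ∧ dist y y' ≤ ε) :
    Tendsto x l (𝓝 y) := by
  refine Metric.tendsto_nhds.2 fun ε hε => ?_
  obtain ⟨x', y', hx', hxx', hyy'⟩ := h (ε / 4) (by positivity)
  filter_upwards [hxx', Metric.tendsto_nhds.1 hx' (ε / 4) (by positivity)] with i hi hi'
  calc dist (x i) y ≤ dist (x i) (x' i) + dist (x' i) y' + dist y' y := dist_triangle4 _ _ _ _
    _ < ε := by rw [dist_comm y']; linarith

lemma Submodule.norm_sub_starProjection_le {𝕜 E : Type*} [RCLike 𝕜] [NormedAddCommGroup E]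
    [InnerProductSpace 𝕜 E] (V : Submodule 𝕜 E) [V.HasOrthogonalProjection] (x : E) {v : E}
    (hv : v ∈ V) : ‖x - V.starProjection x‖ ≤ ‖x - v‖ := by
  rw [starProjection_minimal]
  exact ciInf_le ⟨0, forall_mem_range.2 fun _ => norm_nonneg _⟩ (⟨v, hv⟩ : V)

section Truncation

variable {X E : Type*} [NormedAddCommGroup E] [NormedSpace ℝ E]

noncomputable def softTruncation (w : X → ℝ) (M : ℝ) (g : X → E) (u : X) : E :=
  (M / (M + w u)) • g u

variable {w : X → ℝ} {M : ℝ} {g : X → E}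

lemma norm_softTruncation_le (hM : 0 < M) (hgw : ∀ u, ‖g u‖ ≤ w u) (u : X) :
    ‖softTruncation w M g u‖ ≤ M := by
  have hw : 0 ≤ w u := (norm_nonneg _).trans (hgw u)
  rw [softTruncation, norm_smul, Real.norm_of_nonneg (by positivity), div_mul_eq_mul_div,
    div_le_iff₀ (by positivity)]
  nlinarith [hgw u]

lemma norm_softTruncation_le_norm (hM : 0 < M) (hgw : ∀ u, ‖g u‖ ≤ w u) (u : X) :
    ‖softTruncation w M g u‖ ≤ ‖g u‖ := by
  have hw : 0 ≤ w u := (norm_nonneg _).trans (hgw u)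
  rw [softTruncation, norm_smul, Real.norm_of_nonneg (by positivity)]
  exact mul_le_of_le_one_left (norm_nonneg _) ((div_le_one (by positivity)).2 (by linarith))

lemma norm_sub_softTruncation_le (hM : 0 < M) (hgw : ∀ u, ‖g u‖ ≤ w u) (u : X) :
    ‖g u - softTruncation w M g u‖ ≤ w u ^ 2 / M := by
  have hw : 0 ≤ w u := (norm_nonneg _).trans (hgw u)
  have hsub : g u - softTruncation w M g u = (w u / (M + w u)) • g u := by
    have hcoef : w u / (M + w u) = 1 - M / (M + w u) := by field_simp; ring
    rw [hcoef, sub_smul, one_smul, softTruncation]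
  calc ‖g u - softTruncation w M g u‖ = w u / (M + w u) * ‖g u‖ := by
        rw [hsub, norm_smul, Real.norm_of_nonneg (by positivity)]
    _ ≤ w u / (M + w u) * w u := by gcongr; exact hgw u
    _ ≤ w u ^ 2 / M := by
        rw [div_mul_eq_mul_div, ← sq]
        gcongr
        linarith

lemma continuous_softTruncation [TopologicalSpace X] (hM : 0 < M) (hgw : ∀ u, ‖g u‖ ≤ w u)
    (hw : Continuous w) (hg : Continuous g) : Continuous (softTruncation w M g) :=
  (continuous_const.div (continuous_const.add hw) fun u =>
    (add_pos_of_pos_of_nonneg hM ((norm_nonneg _).trans (hgw u))).ne').smul hg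

lemma norm_integral_sub_integral_softTruncation_le [MeasurableSpace X] [CompleteSpace E]
    {ν : Measure X} (hM : 0 < M) (hgw : ∀ u, ‖g u‖ ≤ w u) (hw : AEMeasurable w ν)
    (hg : Integrable g ν) (hw2 : Integrable (fun u => w u ^ 2) ν) :
    ‖∫ u, g u ∂ν - ∫ u, softTruncation w M g u ∂ν‖ ≤ (∫ u, w u ^ 2 ∂ν) / M := by
  have htr : Integrable (softTruncation w M g) ν :=
    hg.mono (((aemeasurable_const.div (aemeasurable_const.add hw)).aestronglyMeasurable).smul
      hg.aestronglyMeasurable) (.of_forall (norm_softTruncation_le_norm hM hgw))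
  rw [← integral_sub hg htr, ← integral_div]
  exact (norm_integral_le_integral_norm _).trans <|
    integral_mono (hg.sub htr).norm (hw2.div_const M) (norm_sub_softTruncation_le hM hgw)

end Truncation

lemma integrable_and_integral_le_of_lintegral_ofReal_le {X : Type*} [MeasurableSpace X]
    {ν : Measure X} {f : X → ℝ} (hf : AEStronglyMeasurable f ν) (hf0 : ∀ x, 0 ≤ f x) {C : ℝ}
    (hC : 0 ≤ C) (h : ∫⁻ x, ENNReal.ofReal (f x) ∂ν ≤ ENNReal.ofReal C) :
    Integrable f ν ∧ ∫ x, f x ∂ν ≤ C :=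
  ⟨(lintegral_ofReal_ne_top_iff_integrable hf (.of_forall hf0)).1
      (ne_top_of_le_ne_top ENNReal.ofReal_ne_top h),
    (integral_eq_lintegral_of_nonneg_ae (.of_forall hf0) hf).trans_le
      (ENNReal.toReal_le_of_le_ofReal hC h)⟩

lemma dist_integral_integral_softTruncation_exp_le {X E : Type*} [NormedAddCommGroup X]
    [MeasurableSpace X] [OpensMeasurableSpace X] [NormedAddCommGroup E] [NormedSpace ℝ E]
    [CompleteSpace E] {ρ : Measure X} {g : X → E} (hg : AEStronglyMeasurable g ρ) {b M C₁ C₂ : ℝ}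
    (hM : 0 < M) (hC₁ : 0 ≤ C₁) (hC₂ : 0 ≤ C₂) (hgb : ∀ u, ‖g u‖ ≤ exp (b * ‖u‖))
    (h₁ : ∫⁻ u, ENNReal.ofReal (exp (b * ‖u‖)) ∂ρ ≤ ENNReal.ofReal C₁)
    (h₂ : ∫⁻ u, ENNReal.ofReal (exp (2 * b * ‖u‖)) ∂ρ ≤ ENNReal.ofReal C₂) :
    dist (∫ u, g u ∂ρ) (∫ u, softTruncation (fun u => exp (b * ‖u‖)) M g u ∂ρ) ≤ C₂ / M := by
  have hsq : ∀ u : X, exp (b * ‖u‖) ^ 2 = exp (2 * b * ‖u‖) := fun u => by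
    rw [← exp_nat_mul]
    ring_nf
  obtain ⟨hint₁, -⟩ := integrable_and_integral_le_of_lintegral_ofReal_le (by fun_prop)
    (fun _ => (exp_pos _).le) hC₁ h₁
  obtain ⟨hint₂, hle₂⟩ := integrable_and_integral_le_of_lintegral_ofReal_le (by fun_prop)
    (fun _ => (exp_pos _).le) hC₂ h₂
  simp_rw [← hsq] at hint₂ hle₂
  rw [dist_eq_norm]
  calc _ ≤ (∫ u, exp (b * ‖u‖) ^ 2 ∂ρ) / M :=
        norm_integral_sub_integral_softTruncation_le hM hgb (by fun_prop)
          (hint₁.mono' hg (.of_forall hgb)) hint₂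
    _ ≤ C₂ / M := by gcongr

section HilbertSpace

variable {G : Type*} [NormedAddCommGroup G] [InnerProductSpace ℝ G] {ι : Type*} {l : Filter ι}

lemma IsCompact.exists_isOpen_superset_forall_exists_norm_sub_le {X : Type*} [TopologicalSpace X]
    {K : Set X} (hK : IsCompact K) {f : X → G} (hf : Continuous f) {δ : ℝ} (hδ : 0 < δ) :
    ∃ U, IsOpen U ∧ K ⊆ U ∧ ∃ V : Submodule ℝ G, FiniteDimensional ℝ V ∧
      ∀ u ∈ U, ∃ v ∈ V, ‖f u - v‖ ≤ δ := by
  obtain ⟨s, -, hs, hcover⟩ := (hK.image hf).finite_cover_balls hδ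
  refine ⟨f ⁻¹' ⋃ y ∈ s, ball y δ, (isOpen_biUnion fun _ _ => isOpen_ball).preimage hf,
    image_subset_iff.1 hcover, Submodule.span ℝ s, FiniteDimensional.span_of_finite ℝ hs,
    fun u hu => ?_⟩
  obtain ⟨y, hy, hfu⟩ := mem_iUnion₂.1 hu
  exact ⟨y, Submodule.subset_span hy, (mem_ball_iff_norm.1 hfu).le⟩

lemma tendsto_starProjection_of_forall_inner_tendsto (V : Submodule ℝ G) [FiniteDimensional ℝ V]
    {x : ι → G} {y : G} (h : ∀ w, Tendsto (fun i => ⟪w, x i⟫_ℝ) l (𝓝 ⟪w, y⟫_ℝ)) :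
    Tendsto (fun i => V.starProjection (x i)) l (𝓝 (V.starProjection y)) := by
  let B := stdOrthonormalBasis ℝ V
  have hsum : ∀ z : G, V.starProjection z = ∑ j, ⟪(B j : G), z⟫_ℝ • (B j : G) := fun z => by
    simpa using congrArg V.subtype (B.orthogonalProjectionOnto_apply_eq_sum z)
  simp only [hsum]
  exact tendsto_finsetSum _ fun j _ => (h (B j)).smul_const _

theorem tendsto_of_forall_inner_tendsto_of_forall_exists_finiteDimensional {x : ι → G} {y : G}
    (hweak : ∀ w, Tendsto (fun i => ⟪w, x i⟫_ℝ) l (𝓝 ⟪w, y⟫_ℝ))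
    (happrox : ∀ δ > 0, ∃ V : Submodule ℝ G, FiniteDimensional ℝ V ∧
      (∀ᶠ i in l, ∃ v ∈ V, ‖x i - v‖ ≤ δ) ∧ ∃ v ∈ V, ‖y - v‖ ≤ δ) :
    Tendsto x l (𝓝 y) := by
  refine tendsto_of_forall_exists_dist_le fun δ hδ => ?_
  obtain ⟨V, hV, hx, v, hv, hyv⟩ := happrox δ hδ
  refine ⟨fun i => V.starProjection (x i), V.starProjection y,
    tendsto_starProjection_of_forall_inner_tendsto V hweak, ?_, ?_⟩
  · filter_upwards [hx] with i ⟨v, hv, hxv⟩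
    rw [dist_eq_norm]
    exact (V.norm_sub_starProjection_le _ hv).trans hxv
  · rw [dist_eq_norm]
    exact (V.norm_sub_starProjection_le _ hv).trans hyv

variable [CompleteSpace G]

lemma exists_mem_norm_integral_sub_le {X : Type*} [MeasurableSpace X] {ν : Measure X}
    [IsProbabilityMeasure ν] {f : X → G} (hf : Integrable f ν) {M δ : ℝ} (hδ : 0 ≤ δ)
    (hfM : ∀ u, ‖f u‖ ≤ M) (V : Submodule ℝ G) [FiniteDimensional ℝ V] {U : Set X}
    (hU : MeasurableSet U) (hfU : ∀ u ∈ U, ∃ v ∈ V, ‖f u - v‖ ≤ δ) :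
    ∃ v ∈ V, ‖∫ u, f u ∂ν - v‖ ≤ δ + M * ν.real Uᶜ := by
  set P := V.starProjection
  have hpt : ∀ u, ‖f u - P (f u)‖ ≤ δ + Uᶜ.indicator (fun _ => M) u := by
    intro u
    by_cases hu : u ∈ U
    · obtain ⟨v, hv, hfv⟩ := hfU u hu
      rw [indicator_of_notMem (notMem_compl_iff.2 hu), add_zero]
      exact (V.norm_sub_starProjection_le _ hv).trans hfv
    · rw [indicator_of_mem hu]
      have := V.norm_sub_starProjection_le (f u) V.zero_mem
      rw [sub_zero] at this
      linarith [hfM u]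
  refine ⟨P (∫ u, f u ∂ν), V.starProjection_apply_mem _, ?_⟩
  rw [← P.integral_comp_comm hf, ← integral_sub hf (P.integrable_comp hf)]
  calc ‖∫ u, f u - P (f u) ∂ν‖ ≤ ∫ u, ‖f u - P (f u)‖ ∂ν := norm_integral_le_integral_norm _
    _ ≤ ∫ u, (δ + Uᶜ.indicator (fun _ => M) u) ∂ν :=
        integral_mono (hf.sub (P.integrable_comp hf)).norm
          ((integrable_const δ).add ((integrable_const M).indicator hU.compl)) hpt
    _ = δ + M * ν.real Uᶜ := by
        rw [integral_add (integrable_const δ) ((integrable_const M).indicator hU.compl),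
          integral_indicator_const M hU.compl]
        simp [mul_comm]

theorem ProbabilityMeasure.tendsto_integral_of_tendsto {Ω : Type*} [MeasurableSpace Ω]
    [MetricSpace Ω] [CompleteSpace Ω] [SecondCountableTopology Ω] [BorelSpace Ω]
    {μs : ι → ProbabilityMeasure Ω} {μ : ProbabilityMeasure Ω} (hμ : Tendsto μs l (𝓝 μ))
    (f : Ω →ᵇ G) :
    Tendsto (fun i => ∫ ω, f ω ∂(μs i : Measure Ω)) l (𝓝 (∫ ω, f ω ∂(μ : Measure Ω))) := by
  have hint : ∀ ν : ProbabilityMeasure Ω, Integrable f ν := fun ν =>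
    .of_bound f.continuous.aestronglyMeasurable ‖f‖ (.of_forall f.norm_coe_le_norm)
  refine tendsto_of_forall_inner_tendsto_of_forall_exists_finiteDimensional (fun w => ?_)
    (fun δ hδ => ?_)
  · simp_rw [← integral_inner (hint _)]
    exact ProbabilityMeasure.tendsto_iff_forall_integral_tendsto.1 hμ
      ((innerSL ℝ w).compLeftContinuousBounded Ω f)
  set η := δ / (2 * (‖f‖ + 1))
  have hη : 0 < η := by positivity
  obtain ⟨K, hK, hμK⟩ := isTightMeasureSet_iff_exists_isCompact_measure_compl_le.1
    (isTightMeasureSet_singleton (μ := (μ : Measure Ω))) (ENNReal.ofReal (η / 2)) (by positivity)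
  obtain ⟨U, hU, hKU, V, hV, hfU⟩ :=
    hK.exists_isOpen_superset_forall_exists_norm_sub_le f.continuous (half_pos hδ)
  have hμU : (μ : Measure Ω) Uᶜ < ENNReal.ofReal η :=
    (measure_mono (compl_subset_compl.2 hKU)).trans_lt <| (hμK _ rfl).trans_lt <|
      (ENNReal.ofReal_lt_ofReal_iff hη).2 (half_lt_self hη)
  have hclose : ∀ ν : ProbabilityMeasure Ω, (ν : Measure Ω) Uᶜ < ENNReal.ofReal η →
      ∃ v ∈ V, ‖∫ ω, f ω ∂(ν : Measure Ω) - v‖ ≤ δ := by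
    intro ν hνU
    obtain ⟨v, hv, hfv⟩ := exists_mem_norm_integral_sub_le (hint ν) (half_pos hδ).le
      f.norm_coe_le_norm V hU.measurableSet hfU
    have hνU' : (ν : Measure Ω).real Uᶜ ≤ η := (ENNReal.toReal_lt_of_lt_ofReal hνU).le
    refine ⟨v, hv, hfv.trans ?_⟩
    calc δ / 2 + ‖f‖ * (ν : Measure Ω).real Uᶜ ≤ δ / 2 + (‖f‖ + 1) * η := by
          gcongr; linarith
      _ = δ := by simp only [η]; field_simp; ring
  refine ⟨V, hV, ?_, hclose μ hμU⟩
  filter_upwards [eventually_lt_of_limsup_lt <|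
    (ProbabilityMeasure.limsup_measure_closed_le_of_tendsto hμ hU.isClosed_compl).trans_lt hμU]
    with i hi
  exact hclose (μs i) hi

end HilbertSpace

theorem statement5_general
    {H : Type*} [NormedAddCommGroup H] [CompleteSpace H]
    [SecondCountableTopology H] [MeasurableSpace H] [BorelSpace H]
    {G : Type*} [NormedAddCommGroup G] [InnerProductSpace ℝ G] [CompleteSpace G]
    (μs : ℕ → Measure H) (μ : Measure H)
    [∀ n, IsProbabilityMeasure (μs n)] [IsProbabilityMeasure μ]
    (hweak : ∀ h : H → ℝ, Continuous h → (∃ M : ℝ, ∀ u : H, |h u| ≤ M) →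
      Tendsto (fun n => ∫ u, h u ∂(μs n)) atTop (nhds (∫ u, h u ∂μ)))
    (C : ℝ → ℝ) (hC : ∀ b > 0, 0 < C b)
    (hmom : ∀ b > 0, ∀ n : ℕ,
      ∫⁻ u, ENNReal.ofReal (Real.exp (b * ‖u‖)) ∂(μs n) ≤ ENNReal.ofReal (C b))
    (hmom' : ∀ b > 0,
      ∫⁻ u, ENNReal.ofReal (Real.exp (b * ‖u‖)) ∂μ ≤ ENNReal.ofReal (C b))
    (g : H → G) (hg : Continuous g) (b : ℝ) (hb : 0 < b)
    (hgbd : ∀ u : H, ‖g u‖ ≤ Real.exp (b * ‖u‖)) :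
    Tendsto (fun n => ∫ u, g u ∂(μs n)) atTop (nhds (∫ u, g u ∂μ)) := by
  let ν : ℕ → ProbabilityMeasure H := fun n => ⟨μs n, inferInstance⟩
  have hν : Tendsto ν atTop (𝓝 ⟨μ, inferInstance⟩) :=
    ProbabilityMeasure.tendsto_iff_forall_integral_tendsto.2 fun h =>
      hweak h h.continuous ⟨‖h‖, fun u => by simpa using h.norm_coe_le_norm u⟩
  have h2b : 0 < 2 * b := by positivity
  refine tendsto_of_forall_exists_dist_le fun ε hε => ?_
  set M := C (2 * b) / ε
  have hM : 0 < M := div_pos (hC _ h2b) hε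
  let f : H →ᵇ G := .ofNormedAddCommGroup (softTruncation (fun u => exp (b * ‖u‖)) M g)
    (continuous_softTruncation hM hgbd (by fun_prop) hg) M (norm_softTruncation_le hM hgbd)
  have hclose : ∀ ρ : Measure H, (∀ c > 0,
      ∫⁻ u, ENNReal.ofReal (exp (c * ‖u‖)) ∂ρ ≤ ENNReal.ofReal (C c)) →
      dist (∫ u, g u ∂ρ) (∫ u, f u ∂ρ) ≤ ε := fun ρ hρ =>
    (dist_integral_integral_softTruncation_exp_le hg.aestronglyMeasurable hM (hC b hb).le
      (hC _ h2b).le hgbd (hρ b hb) (hρ _ h2b)).trans_eq (div_div_cancel₀ (hC _ h2b).ne')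
  exact ⟨fun n => ∫ u, f u ∂(μs n), ∫ u, f u ∂μ,
    ProbabilityMeasure.tendsto_integral_of_tendsto hν f,
    .of_forall fun n => hclose (μs n) fun c hc => hmom c hc n, hclose μ hmom'⟩

/-- Convergence of the conditional-mean-type vector integrals:
if `(μs n), μ` are Borel probability measures on a real separable Hilbert space `H`,
uniformly discretized with exponential weights, and `g : H → G` is a continuous map
into a real separable Hilbert space with `‖g u‖ ≤ exp (b * ‖u‖)` for some `b > 0`,
then the Bochner integrals `∫ g ∂(μs n)` converge to `∫ g ∂μ` in `G`. -/
theorem statement5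
    {H : Type*} [NormedAddCommGroup H] [InnerProductSpace ℝ H] [CompleteSpace H]
    [SecondCountableTopology H] [MeasurableSpace H] [BorelSpace H]
    {G : Type*} [NormedAddCommGroup G] [InnerProductSpace ℝ G] [CompleteSpace G]
    [SecondCountableTopology G]
    (μs : ℕ → Measure H) (μ : Measure H)
    [∀ n, IsProbabilityMeasure (μs n)] [IsProbabilityMeasure μ]
    (hweak : ∀ h : H → ℝ, Continuous h → (∃ M : ℝ, ∀ u : H, |h u| ≤ M) →
      Tendsto (fun n => ∫ u, h u ∂(μs n)) atTop (nhds (∫ u, h u ∂μ)))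
    (C : ℝ → ℝ) (hC : ∀ b > 0, 0 < C b)
    (hmom : ∀ b > 0, ∀ n : ℕ,
      ∫⁻ u, ENNReal.ofReal (Real.exp (b * ‖u‖)) ∂(μs n) ≤ ENNReal.ofReal (C b))
    (hmom' : ∀ b > 0,
      ∫⁻ u, ENNReal.ofReal (Real.exp (b * ‖u‖)) ∂μ ≤ ENNReal.ofReal (C b))
    (g : H → G) (hg : Continuous g) (b : ℝ) (hb : 0 < b)
    (hgbd : ∀ u : H, ‖g u‖ ≤ Real.exp (b * ‖u‖)) :
    Tendsto (fun n => ∫ u, g u ∂(μs n)) atTop (nhds (∫ u, g u ∂μ)) :=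
  statement5_general μs μ hweak C hC hmom hmom' g hg b hb hgbd
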